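/- In a static spherically symmetric spacetime with metric -f(r)² dt² + dr²/f(r)² + r² dS², the 2-form Q = r dr ∧ dt is a conformal Killing–Yano 2-form: for all vector fields X, Y, Z, D_X Q(Y,Z) + D_Y Q(X,Z) = (1/3)(2⟨X,Y⟩⟨ξ,Z⟩ - ⟨X,Z⟩⟨ξ,Y⟩ - ⟨Y,Z⟩⟨ξ,X⟩) with ξ = -3 ∂/∂t. -/

import Mathlib

noncomputable section

/-- Points of the spacetime in coordinates `(t, r, θ, φ)`. -/
abbrev SpacetimePt := Fin 4 → ℝ

/-- Coordinate partial derivative `∂_i F` at `x`. -/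
def pd (i : Fin 4) (F : SpacetimePt → ℝ) (x : SpacetimePt) : ℝ :=
  deriv (fun s => F (Function.update x i s)) (x i)

/-- The static spherically symmetric metric
`g = -f(r)² dt² + f(r)⁻² dr² + r² (dθ² + sin²θ dφ²)` in components. -/
def metricg (f : ℝ → ℝ) (x : SpacetimePt) (i j : Fin 4) : ℝ :=
  if i = 0 ∧ j = 0 then -(f (x 1)) ^ 2
  else if i = 1 ∧ j = 1 then 1 / (f (x 1)) ^ 2
  else if i = 2 ∧ j = 2 then (x 1) ^ 2
  else if i = 3 ∧ j = 3 then (x 1) ^ 2 * (Real.sin (x 2)) ^ 2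
  else 0

/-- The inverse metric in components. -/
def metricgInv (f : ℝ → ℝ) (x : SpacetimePt) (i j : Fin 4) : ℝ :=
  if i = 0 ∧ j = 0 then -(1 / (f (x 1)) ^ 2)
  else if i = 1 ∧ j = 1 then (f (x 1)) ^ 2
  else if i = 2 ∧ j = 2 then 1 / (x 1) ^ 2
  else if i = 3 ∧ j = 3 then 1 / ((x 1) ^ 2 * (Real.sin (x 2)) ^ 2)
  else 0

/-- Christoffel symbols `Γ^a_{bc}` of the Levi-Civita connection of `g`. -/
def Christoffel (f : ℝ → ℝ) (x : SpacetimePt) (a b c : Fin 4) : ℝ :=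
  (1 / 2) * ∑ d : Fin 4, metricgInv f x a d *
    (pd b (fun y => metricg f y d c) x + pd c (fun y => metricg f y d b) x
      - pd d (fun y => metricg f y b c) x)

/-- Components of the 2-form `Q = r dr ∧ dt`. -/
def QKY (x : SpacetimePt) (i j : Fin 4) : ℝ :=
  if i = 1 ∧ j = 0 then x 1 else if i = 0 ∧ j = 1 then -(x 1) else 0

/-- Covariant derivative `(D_a Q)_{bc}`. -/
def covQ (f : ℝ → ℝ) (x : SpacetimePt) (a b c : Fin 4) : ℝ :=
  pd a (fun y => QKY y b c) x
    - ∑ d : Fin 4, Christoffel f x d a b * QKY x d c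
    - ∑ d : Fin 4, Christoffel f x d a c * QKY x b d

/-- The covector `⟨div Q, ·⟩`: `(div Q)_c = g^{ab} (D_a Q)_{bc}`. -/
def divQ (f : ℝ → ℝ) (x : SpacetimePt) (c : Fin 4) : ℝ :=
  ∑ a : Fin 4, ∑ b : Fin 4, metricgInv f x a b * covQ f x a b c

set_option linter.unreachableTactic false
set_option linter.unusedTactic false

lemma fin4cases (i : Fin 4) : i = 0 ∨ i = 1 ∨ i = 2 ∨ i = 3 := by omega

set_option maxHeartbeats 4000000 in
lemma pd_metricg (f : ℝ → ℝ) (hf : Differentiable ℝ f) (x : SpacetimePt)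
    (hfne : f (x 1) ≠ 0) (i d e : Fin 4) :
    pd i (fun y => metricg f y d e) x =
      if i = 1 then
        (if d = 0 ∧ e = 0 then -(2 * f (x 1) * deriv f (x 1))
         else if d = 1 ∧ e = 1 then -(2 * deriv f (x 1)) / (f (x 1)) ^ 3
         else if d = 2 ∧ e = 2 then 2 * x 1
         else if d = 3 ∧ e = 3 then 2 * x 1 * Real.sin (x 2) ^ 2
         else 0)
      else if i = 2 then
        (if d = 3 ∧ e = 3 then x 1 ^ 2 * (2 * Real.sin (x 2) * Real.cos (x 2)) else 0)
      else 0 := by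
  have h1 : HasDerivAt f (deriv f (x 1)) (x 1) := (hf (x 1)).hasDerivAt
  rcases fin4cases i with rfl|rfl|rfl|rfl <;> rcases fin4cases d with rfl|rfl|rfl|rfl <;>
      rcases fin4cases e with rfl|rfl|rfl|rfl <;>
    simp (config := { decide := true }) only [pd, metricg, Function.update_apply] <;>
    norm_num <;>
    first
      | rfl
      | exact Or.inl rfl
      | (rw [(show HasDerivAt (fun i => f i ^ 2) _ _ from h1.pow 2).deriv]; push_cast; ring)
      | (rw [((h1.pow 2).neg).deriv]; push_cast; ring)
      | (rw [(show HasDerivAt (fun s => (f s ^ 2)⁻¹) _ _ from (h1.pow 2).inv (pow_ne_zero 2 hfne)).deriv]; simp only [Pi.pow_apply]; field_simp; ring)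
      | (simp [deriv_pow]; ring)
      | (rw [((hasDerivAt_pow 2 (x 1)).mul_const _).deriv]; push_cast; ring)
      | (rw [(((Real.hasDerivAt_sin _).pow 2).const_mul _).deriv]; push_cast; ring)

lemma pd_QKY (x : SpacetimePt) (i b c : Fin 4) :
    pd i (fun y => QKY y b c) x =
      if i = 1 then (if b = 1 ∧ c = 0 then 1 else if b = 0 ∧ c = 1 then -1 else 0)
      else 0 := by
  rcases fin4cases i with rfl|rfl|rfl|rfl <;> rcases fin4cases b with rfl|rfl|rfl|rfl <;>
      rcases fin4cases c with rfl|rfl|rfl|rfl <;>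
    simp (config := { decide := true }) only [pd, QKY, Function.update_apply] <;>
    norm_num

set_option maxHeartbeats 4000000 in
lemma christoffel_eval (f : ℝ → ℝ) (hf : Differentiable ℝ f) (x : SpacetimePt)
    (hrne : x 1 ≠ 0) (hfne : f (x 1) ≠ 0) (hsin : Real.sin (x 2) ≠ 0)
    (a b c : Fin 4) :
    Christoffel f x a b c =
      if a = 0 then
        (if (b = 0 ∧ c = 1) ∨ (b = 1 ∧ c = 0) then deriv f (x 1) / f (x 1) else 0)
      else if a = 1 then
        (if b = 0 ∧ c = 0 then (f (x 1)) ^ 3 * deriv f (x 1)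
         else if b = 1 ∧ c = 1 then -(deriv f (x 1) / f (x 1))
         else if b = 2 ∧ c = 2 then -(x 1 * (f (x 1)) ^ 2)
         else if b = 3 ∧ c = 3 then -(x 1 * (f (x 1)) ^ 2 * Real.sin (x 2) ^ 2)
         else 0)
      else if a = 2 then
        (if (b = 1 ∧ c = 2) ∨ (b = 2 ∧ c = 1) then 1 / x 1
         else if b = 3 ∧ c = 3 then -(Real.sin (x 2) * Real.cos (x 2))
         else 0)
      else
        (if (b = 1 ∧ c = 3) ∨ (b = 3 ∧ c = 1) then 1 / x 1
         else if (b = 2 ∧ c = 3) ∨ (b = 3 ∧ c = 2) then Real.cos (x 2) / Real.sin (x 2)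
         else 0) := by
  rcases fin4cases a with rfl|rfl|rfl|rfl <;> rcases fin4cases b with rfl|rfl|rfl|rfl <;>
      rcases fin4cases c with rfl|rfl|rfl|rfl <;>
    simp (config := { decide := true }) only [Christoffel, Fin.sum_univ_four,
      pd_metricg f hf x hfne, metricgInv] <;>
    (try norm_num) <;> (try field_simp) <;> (try ring)

set_option maxHeartbeats 4000000 in
lemma covQ_eval (f : ℝ → ℝ) (hf : Differentiable ℝ f) (x : SpacetimePt)
    (hrne : x 1 ≠ 0) (hfne : f (x 1) ≠ 0) (hsin : Real.sin (x 2) ≠ 0)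
    (a b c : Fin 4) :
    covQ f x a b c =
      if a = 1 ∧ b = 1 ∧ c = 0 then 1
      else if a = 1 ∧ b = 0 ∧ c = 1 then -1
      else if a = 2 ∧ b = 2 ∧ c = 0 then (x 1) ^ 2 * (f (x 1)) ^ 2
      else if a = 2 ∧ b = 0 ∧ c = 2 then -((x 1) ^ 2 * (f (x 1)) ^ 2)
      else if a = 3 ∧ b = 3 ∧ c = 0 then (x 1) ^ 2 * (f (x 1)) ^ 2 * Real.sin (x 2) ^ 2
      else if a = 3 ∧ b = 0 ∧ c = 3 then -((x 1) ^ 2 * (f (x 1)) ^ 2 * Real.sin (x 2) ^ 2)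
      else 0 := by
  rcases fin4cases a with rfl|rfl|rfl|rfl <;> rcases fin4cases b with rfl|rfl|rfl|rfl <;>
      rcases fin4cases c with rfl|rfl|rfl|rfl <;>
    simp (config := { decide := true }) only [covQ, Fin.sum_univ_four, pd_QKY,
      christoffel_eval f hf x hrne hfne hsin] <;>
    (try simp (config := { decide := true }) only [QKY]) <;>
    (try norm_num) <;> (try field_simp) <;> (try ring)

set_option maxHeartbeats 4000000 in
/-- In the static spherically symmetric spacetime
`-f(r)² dt² + dr²/f(r)² + r² dS²`, the 2-form `Q = r dr ∧ dt` is a conformal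
Killing–Yano 2-form: in components,
`(D_a Q)_{bc} + (D_b Q)_{ac} = (1/3)(2 g_{ab} ξ_c - g_{ac} ξ_b - g_{bc} ξ_a)`
where `ξ = div Q = -3 ∂/∂t`, i.e. `ξ_c = -3 g_{0c}`. -/
theorem stmt9 (f : ℝ → ℝ) (hf : ContDiff ℝ (⊤ : ℕ∞) f) (x : SpacetimePt)
    (hr : 0 < x 1) (hfpos : 0 < f (x 1)) (hsin : Real.sin (x 2) ≠ 0) :
    ∀ a b c : Fin 4, covQ f x a b c + covQ f x b a c =
      (1 / 3) * (2 * metricg f x a b * (-3 * metricg f x 0 c)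
        - metricg f x a c * (-3 * metricg f x 0 b)
        - metricg f x b c * (-3 * metricg f x 0 a)) := by
  have hd : Differentiable ℝ f := hf.differentiable (by norm_num)
  have hrne : x 1 ≠ 0 := ne_of_gt hr
  have hfne : f (x 1) ≠ 0 := ne_of_gt hfpos
  intro a b c
  rcases fin4cases a with rfl|rfl|rfl|rfl <;> rcases fin4cases b with rfl|rfl|rfl|rfl <;>
      rcases fin4cases c with rfl|rfl|rfl|rfl <;>
    simp (config := { decide := true }) only
      [covQ_eval f hd x hrne hfne hsin, metricg] <;>
    (try norm_num) <;> (try field_simp) <;> (try ring)
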